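/- arXiv:2311.07013 — 2 statements merged into one kernel-verified Lean document; each statement's English description precedes it below -/
import Mathlib

section
/- Let π be a probability measure on Θ and let L, L_n : Θ → ℝ be measurable with e^{n(L−L_n)} π-integrable. Define ζ_n = E_{θ∼π}[e^{n(L(θ)−L_n(θ))}]. If ζ_n is a nonnegative random variable (depending on the sample) with finite expectation, then with probability at least 1−δ over the sample, for every probability measure ρ ≪ π with finite KL(ρ‖π): E_{θ∼ρ} L(θ) ≤ E_{θ∼ρ} L_n(θ) + (1/n)[KL(ρ‖π) + log E[ζ_n] + log(1/δ)]. -/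
/-! The Donsker–Varadhan inequality `∫ f ∂ρ ≤ KL(ρ ‖ π) + log ∫ exp f ∂π`, applied to
`f = n (L - Lₙ)`, bounds `n (∫ L ∂ρ - ∫ Lₙ ∂ρ)` by `KL(ρ ‖ π) + log ζₙ` simultaneously for all `ρ`.
By Markov's inequality `ζₙ < E[ζₙ] / δ` outside an event of probability at most `δ`. -/

open MeasureTheory InformationTheory

theorem integral_le_integral_llr_add_log_integral_exp {α : Type*} [MeasurableSpace α]
    {μ ν : Measure α} [IsProbabilityMeasure μ] [SigmaFinite ν] {f : α → ℝ} (hμν : μ ≪ ν)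
    (hfμ : Integrable f μ) (hfν : Integrable (fun x ↦ Real.exp (f x)) ν)
    (h_int : Integrable (llr μ ν) μ) :
    ∫ x, f x ∂μ ≤ ∫ x, llr μ ν x ∂μ + Real.log (∫ x, Real.exp (f x) ∂ν) := by
  have : NeZero ν := ⟨fun h ↦ IsProbabilityMeasure.ne_zero μ (by simpa [h] using hμν)⟩
  have : IsProbabilityMeasure (ν.tilted f) := isProbabilityMeasure_tilted hfν
  -- Gibbs' inequality for `μ` against `ν.tilted f`, whose log-likelihood ratio is explicit.
  have gibbs := integral_llr_add_sub_measure_univ_nonneg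
    (hμν.trans (absolutelyContinuous_tilted hfν))
    (integrable_llr_tilted_right hμν hfμ h_int hfν)
  rw [integral_llr_tilted_right hμν hfμ hfν h_int] at gibbs
  simp only [probReal_univ] at gibbs
  linarith

theorem ofReal_one_sub_le_measure_lt_integral_div {α : Type*} [MeasurableSpace α]
    {μ : Measure α} [IsProbabilityMeasure μ] {f : α → ℝ} (hf_nonneg : 0 ≤ᵐ[μ] f)
    (hf_int : Integrable f μ) (hf_pos : 0 < ∫ x, f x ∂μ) {δ : ℝ} (hδ : 0 < δ) :
    ENNReal.ofReal (1 - δ) ≤ μ {x | f x < (∫ x, f x ∂μ) / δ} := by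
  set c := (∫ x, f x ∂μ) / δ
  have markov : μ.real {x | c ≤ f x} ≤ δ := by
    have := mul_meas_ge_le_integral_of_nonneg hf_nonneg hf_int c
    rwa [← div_mul_cancel₀ (∫ x, f x ∂μ) hδ.ne', mul_le_mul_iff_right₀ (by positivity)] at this
  have hcompl : {x | f x < c} = {x | c ≤ f x}ᶜ := by ext; simp
  have hnull : NullMeasurableSet {x | c ≤ f x} μ :=
    hf_int.aemeasurable.nullMeasurable measurableSet_Ici
  rw [hcompl, prob_compl_eq_one_sub₀ hnull,
    ENNReal.ofReal_sub _ hδ.le, ENNReal.ofReal_one]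
  exact tsub_le_tsub_left
    ((ENNReal.le_ofReal_iff_toReal_le (measure_ne_top _ _) hδ.le).2 markov) 1

theorem pac_bayes_core_general {Θ Ω : Type*} [MeasurableSpace Θ] [MeasurableSpace Ω]
    (P : Measure Ω) [IsProbabilityMeasure P]
    (π : Measure Θ) [IsProbabilityMeasure π]
    (n : ℕ) (hn : 0 < n)
    (L : Θ → ℝ) (Ln : Ω → Θ → ℝ)
    (δ : ℝ) (hδ0 : 0 < δ)
    (hexp : ∀ ω, Integrable (fun θ => Real.exp ((n : ℝ) * (L θ - Ln ω θ))) π)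
    (hζ : Integrable
      (fun ω => ∫ θ, Real.exp ((n : ℝ) * (L θ - Ln ω θ)) ∂π) P) :
    P {ω | ∀ ρ : Measure Θ, IsProbabilityMeasure ρ → ρ ≪ π →
        Integrable (fun θ => Real.log (ρ.rnDeriv π θ).toReal) ρ →
        Integrable L ρ → Integrable (Ln ω) ρ →
        ∫ θ, L θ ∂ρ ≤ ∫ θ, Ln ω θ ∂ρ + (1 / (n : ℝ)) *
          ((∫ θ, Real.log (ρ.rnDeriv π θ).toReal ∂ρ)
            + Real.log (∫ ω', ∫ θ, Real.exp ((n : ℝ) * (L θ - Ln ω' θ)) ∂π ∂P)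
            + Real.log (1 / δ))} ≥ ENNReal.ofReal (1 - δ) := by
  set ζ : Ω → ℝ := fun ω => ∫ θ, Real.exp ((n : ℝ) * (L θ - Ln ω θ)) ∂π
  have hζ_pos : ∀ ω, 0 < ζ ω := fun ω ↦ integral_exp_pos (hexp ω)
  have hZ_pos : 0 < ∫ ω, ζ ω ∂P := by
    rw [integral_pos_iff_support_of_nonneg (fun ω ↦ (hζ_pos ω).le) hζ,
      Function.support_eq_univ fun ω ↦ (hζ_pos ω).ne']
    simp
  refine (ofReal_one_sub_le_measure_lt_integral_div (.of_forall fun ω ↦ (hζ_pos ω).le) hζ hZ_pos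
    hδ0).trans (measure_mono fun ω hω ρ _ hρπ hkl hLρ hLnρ ↦ ?_)
  have hdv : (n : ℝ) * (∫ θ, L θ ∂ρ - ∫ θ, Ln ω θ ∂ρ)
      ≤ ∫ θ, Real.log (ρ.rnDeriv π θ).toReal ∂ρ + Real.log (ζ ω) := by
    rw [← integral_sub hLρ hLnρ, ← integral_const_mul]
    exact integral_le_integral_llr_add_log_integral_exp hρπ ((hLρ.sub hLnρ).const_mul _)
      (hexp ω) hkl
  have hlog : Real.log (ζ ω) ≤ Real.log (∫ ω, ζ ω ∂P) + Real.log (1 / δ) := by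
    rw [← Real.log_mul hZ_pos.ne' (by positivity), ← div_eq_mul_one_div]
    exact Real.log_le_log (hζ_pos ω) hω.le
  have hn' : (0 : ℝ) < n := by exact_mod_cast hn
  rw [one_div_mul_eq_div, ← sub_le_iff_le_add', le_div_iff₀ hn']
  linarith

/-- The core PAC-Bayes bound: with probability at least `1 - δ` over the sample,
for every posterior `ρ ≪ π` with finite KL divergence, the expected true risk is
bounded by the expected empirical risk plus the PAC-Bayes complexity term. -/
theorem pac_bayes_core {Θ Ω : Type*} [MeasurableSpace Θ] [MeasurableSpace Ω]
    (P : Measure Ω) [IsProbabilityMeasure P]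
    (π : Measure Θ) [IsProbabilityMeasure π]
    (n : ℕ) (hn : 0 < n)
    (L : Θ → ℝ) (Ln : Ω → Θ → ℝ)
    (hL : Measurable L) (hLn : Measurable (Function.uncurry Ln))
    (δ : ℝ) (hδ0 : 0 < δ) (hδ1 : δ < 1)
    (hexp : ∀ ω, Integrable (fun θ => Real.exp ((n : ℝ) * (L θ - Ln ω θ))) π)
    (hζ : Integrable
      (fun ω => ∫ θ, Real.exp ((n : ℝ) * (L θ - Ln ω θ)) ∂π) P) :
    P {ω | ∀ ρ : Measure Θ, IsProbabilityMeasure ρ → ρ ≪ π →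
        Integrable (fun θ => Real.log (ρ.rnDeriv π θ).toReal) ρ →
        Integrable L ρ → Integrable (Ln ω) ρ →
        ∫ θ, L θ ∂ρ ≤ ∫ θ, Ln ω θ ∂ρ + (1 / (n : ℝ)) *
          ((∫ θ, Real.log (ρ.rnDeriv π θ).toReal ∂ρ)
            + Real.log (∫ ω', ∫ θ, Real.exp ((n : ℝ) * (L θ - Ln ω' θ)) ∂π ∂P)
            + Real.log (1 / δ))} ≥ ENNReal.ofReal (1 - δ) :=
  pac_bayes_core_general P π n hn L Ln δ hδ0 hexp hζ
end

section
/- Let R : ℝ^d → ℝ be continuous with a unique global minimizer θ₀, and suppose R is coercive (R(θ) → ∞ as ‖θ‖ → ∞) and e^{−R/τ} is integrable for all τ > 0. Define π_τ(θ) = e^{−R(θ)/τ} / ∫ e^{−R/τ}. Then for every ε > 0, the π_τ-probability of the ball of radius ε around θ₀ tends to 1 as τ → 0⁺. -/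
open MeasureTheory Filter Topology Set

/-!
Let `m = R θ₀` and `U` a neighbourhood of `θ₀`. Coercivity and uniqueness of the minimizer give a
gap `c > 0` with `R ≥ m + c` off `U`, while continuity gives a set `V ⊆ U` of positive finite measure
on which `R < m + c / 2`. Hence the mass of `e^{-R/τ}` on `U` is at least `|V| e^{-(m + c/2)/τ}`,
that off `U` is `O(e^{-(m + c)/τ})`, and their ratio is `O(e^{-c/(2τ)}) → 0`.
-/

theorem exists_pos_add_le_of_notMem_of_tendsto_cocompact {X : Type*} [TopologicalSpace X]
    {R : X → ℝ} (hR : Continuous R) (hcoercive : Tendsto R (cocompact X) atTop) {x₀ : X}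
    (hmin : ∀ x, x ≠ x₀ → R x₀ < R x) {U : Set X} (hU : IsOpen U) (hx₀ : x₀ ∈ U) :
    ∃ c > 0, ∀ x ∉ U, R x₀ + c ≤ R x := by
  obtain ⟨K, hK, hKc⟩ :=
    mem_cocompact.mp (hcoercive.eventually (eventually_ge_atTop (R x₀ + 1)))
  obtain ⟨a, hxa, ha⟩ := (hK.diff hU).exists_forall_le' hR.continuousOn
    fun x hx => hmin x (by rintro rfl; exact hx.2 hx₀)
  refine ⟨min 1 (a - R x₀), lt_min one_pos (sub_pos.mpr hxa), fun x hxU => ?_⟩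
  by_cases hxK : x ∈ K
  · linarith [ha x ⟨hxK, hxU⟩, min_le_right 1 (a - R x₀)]
  · linarith [show R x₀ + 1 ≤ R x from hKc hxK, min_le_left 1 (a - R x₀)]

theorem exists_isOpen_measure_pos_lt_top_subset_lt {X : Type*} [TopologicalSpace X]
    [MeasurableSpace X] (μ : Measure X) [μ.IsOpenPosMeasure] [IsLocallyFiniteMeasure μ]
    {R : X → ℝ} (hR : Continuous R) {x₀ : X} {a : ℝ} (ha : R x₀ < a) {U : Set X} (hU : IsOpen U)
    (hx₀ : x₀ ∈ U) :
    ∃ V, IsOpen V ∧ 0 < μ V ∧ μ V < ⊤ ∧ V ⊆ U ∧ ∀ x ∈ V, R x < a := by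
  obtain ⟨s, hs, hμs⟩ := μ.finiteAt_nhds x₀
  have hV : IsOpen (interior s ∩ U ∩ R ⁻¹' Iio a) :=
    (isOpen_interior.inter hU).inter (isOpen_Iio.preimage hR)
  refine ⟨_, hV, hV.measure_pos μ ⟨x₀, ⟨mem_interior_iff_mem_nhds.mpr hs, hx₀⟩, ha⟩,
    (measure_mono (inter_subset_left.trans (inter_subset_left.trans interior_subset))).trans_lt hμs,
    inter_subset_left.trans inter_subset_right, fun x hx => hx.2⟩

section GibbsBounds

variable {X : Type*} [MeasurableSpace X] {μ : Measure X} {R : X → ℝ} {τ : ℝ}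

theorem mul_exp_neg_div_le_setIntegral {s V : Set X} {a : ℝ} (hV : MeasurableSet V)
    (hVs : V ⊆ s) (hμV : μ V ≠ ⊤) (ha : ∀ x ∈ V, R x ≤ a) (hτ : 0 < τ)
    (hint : IntegrableOn (fun x => Real.exp (-R x / τ)) s μ) :
    μ.real V * Real.exp (-a / τ) ≤ ∫ x in s, Real.exp (-R x / τ) ∂μ :=
  calc μ.real V * Real.exp (-a / τ) = ∫ _ in V, Real.exp (-a / τ) ∂μ := by
        rw [setIntegral_const, smul_eq_mul]
    _ ≤ ∫ x in V, Real.exp (-R x / τ) ∂μ :=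
        setIntegral_mono_on (integrableOn_const hμV) (hint.mono_set hVs) hV fun x hx =>
          Real.exp_le_exp.mpr (div_le_div_of_nonneg_right (neg_le_neg (ha x hx)) hτ.le)
    _ ≤ ∫ x in s, Real.exp (-R x / τ) ∂μ :=
        setIntegral_mono_set hint (Eventually.of_forall fun _ => (Real.exp_pos _).le)
          hVs.eventuallyLE

theorem setIntegral_exp_neg_div_le {s : Set X} {b : ℝ} (hs : MeasurableSet s)
    (hb : ∀ x ∈ s, b ≤ R x) (hτ : 0 < τ) (hτ1 : τ ≤ 1)
    (hint : IntegrableOn (fun x => Real.exp (-R x / τ)) s μ)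
    (hint1 : Integrable (fun x => Real.exp (-R x)) μ) :
    ∫ x in s, Real.exp (-R x / τ) ∂μ ≤
      Real.exp b * Real.exp (-b / τ) * ∫ x, Real.exp (-R x) ∂μ := by
  have hint1' := hint1.const_mul (Real.exp b * Real.exp (-b / τ))
  calc ∫ x in s, Real.exp (-R x / τ) ∂μ
      ≤ ∫ x in s, Real.exp b * Real.exp (-b / τ) * Real.exp (-R x) ∂μ := by
        refine setIntegral_mono_on hint hint1'.integrableOn hs fun x hx => ?_
        rw [← Real.exp_add, ← Real.exp_add, Real.exp_le_exp]
        have hprod : 0 ≤ (R x - b) * (1 / τ - 1) :=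
          mul_nonneg (sub_nonneg.mpr (hb x hx)) (sub_nonneg.mpr (one_le_one_div hτ hτ1))
        have hexpand : (R x - b) * (1 / τ - 1) = (b + -b / τ + -R x) - (-R x / τ) := by
          field_simp; ring
        linarith
    _ ≤ ∫ x, Real.exp b * Real.exp (-b / τ) * Real.exp (-R x) ∂μ :=
        setIntegral_le_integral hint1' (Eventually.of_forall fun _ => by positivity)
    _ = Real.exp b * Real.exp (-b / τ) * ∫ x, Real.exp (-R x) ∂μ := integral_const_mul _ _

end GibbsBounds

theorem tendsto_exp_neg_div_nhdsGT_zero {k : ℝ} (hk : 0 < k) :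
    Tendsto (fun τ => Real.exp (-k / τ)) (𝓝[>] 0) (𝓝 0) := by
  simpa only [div_eq_mul_inv, Function.comp_def] using
    Real.tendsto_exp_atBot.comp (tendsto_inv_nhdsGT_zero.const_mul_atTop_of_neg (neg_neg_of_pos hk))

theorem tendsto_div_add_of_le_mul {α : Type*} {l : Filter α} {A O g : α → ℝ}
    (hA : ∀ᶠ t in l, 0 < A t) (hO : ∀ᶠ t in l, 0 ≤ O t) (hle : ∀ᶠ t in l, O t ≤ g t * A t)
    (hg : Tendsto g l (𝓝 0)) :
    Tendsto (fun t => A t / (A t + O t)) l (𝓝 1) := by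
  have hlow : Tendsto (fun t => (1 + g t)⁻¹) l (𝓝 1) := by
    simpa using (tendsto_const_nhds.add hg).inv₀ (by norm_num : (1 + 0 : ℝ) ≠ 0)
  refine tendsto_of_tendsto_of_tendsto_of_le_of_le' hlow tendsto_const_nhds ?_ ?_
  · filter_upwards [hA, hO, hle] with t hA hO hle
    have hg : 0 ≤ g t := nonneg_of_mul_nonneg_left (hO.trans hle) hA
    rw [inv_eq_one_div, div_le_div_iff₀ (by positivity) (by positivity)]
    nlinarith
  · filter_upwards [hA, hO] with t hA hO
    exact div_le_one_of_le₀ (by linarith) (by positivity)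

theorem tendsto_setIntegral_div_integral_exp_neg_div {X : Type*} [TopologicalSpace X]
    [MeasurableSpace X] [OpensMeasurableSpace X] (μ : Measure X) [μ.IsOpenPosMeasure]
    [IsLocallyFiniteMeasure μ] {R : X → ℝ} (hR : Continuous R)
    (hcoercive : Tendsto R (cocompact X) atTop) {x₀ : X} (hmin : ∀ x, x ≠ x₀ → R x₀ < R x)
    (hint : ∀ τ : ℝ, 0 < τ → Integrable (fun x => Real.exp (-R x / τ)) μ) {U : Set X}
    (hU : IsOpen U) (hx₀ : x₀ ∈ U) :
    Tendsto (fun τ => (∫ x in U, Real.exp (-R x / τ) ∂μ) / ∫ x, Real.exp (-R x / τ) ∂μ)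
      (𝓝[>] 0) (𝓝 1) := by
  obtain ⟨c, hc, hgap⟩ :=
    exists_pos_add_le_of_notMem_of_tendsto_cocompact hR hcoercive hmin hU hx₀
  obtain ⟨V, hVopen, hV0, hVtop, hVU, hVR⟩ := exists_isOpen_measure_pos_lt_top_subset_lt μ hR
    (by linarith : R x₀ < R x₀ + c / 2) hU hx₀
  have hμV : 0 < μ.real V := ENNReal.toReal_pos hV0.ne' hVtop.ne
  have hint1 : Integrable (fun x => Real.exp (-R x)) μ := by simpa using hint 1 one_pos
  set C := Real.exp (R x₀ + c) * (∫ x, Real.exp (-R x) ∂μ) / μ.real V with hC_def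
  have hC : 0 ≤ C := div_nonneg (mul_nonneg (Real.exp_pos _).le
    (integral_nonneg fun _ => (Real.exp_pos _).le)) hμV.le
  have hτ : ∀ᶠ τ in 𝓝[>] (0 : ℝ), τ ∈ Ioc 0 1 := Ioc_mem_nhdsGT one_pos
  have hlower : ∀ τ : ℝ, 0 < τ →
      μ.real V * Real.exp (-(R x₀ + c / 2) / τ) ≤ ∫ x in U, Real.exp (-R x / τ) ∂μ :=
    fun τ hτ => mul_exp_neg_div_le_setIntegral hVopen.measurableSet hVU hVtop.ne
      (fun x hx => (hVR x hx).le) hτ (hint τ hτ).integrableOn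
  refine (tendsto_div_add_of_le_mul (A := fun τ => ∫ x in U, Real.exp (-R x / τ) ∂μ)
    (O := fun τ => ∫ x in Uᶜ, Real.exp (-R x / τ) ∂μ)
    (g := fun τ => C * Real.exp (-(c / 2) / τ)) ?_ ?_ ?_ ?_).congr' ?_
  · filter_upwards [hτ] with τ hτ
    exact (mul_pos hμV (Real.exp_pos _)).trans_le (hlower τ hτ.1)
  · exact Eventually.of_forall fun τ =>
      setIntegral_nonneg hU.measurableSet.compl fun _ _ => (Real.exp_pos _).le
  · filter_upwards [hτ] with τ ⟨hτ0, hτ1⟩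
    calc ∫ x in Uᶜ, Real.exp (-R x / τ) ∂μ
        ≤ Real.exp (R x₀ + c) * Real.exp (-(R x₀ + c) / τ) * ∫ x, Real.exp (-R x) ∂μ :=
          setIntegral_exp_neg_div_le hU.measurableSet.compl hgap hτ0 hτ1
            (hint τ hτ0).integrableOn hint1
      _ = C * Real.exp (-(c / 2) / τ) * (μ.real V * Real.exp (-(R x₀ + c / 2) / τ)) := by
          have hsplit : Real.exp (-(R x₀ + c) / τ) =
              Real.exp (-(c / 2) / τ) * Real.exp (-(R x₀ + c / 2) / τ) := by
            rw [← Real.exp_add]; ring_nf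
          rw [hsplit, hC_def]
          field_simp
      _ ≤ C * Real.exp (-(c / 2) / τ) * ∫ x in U, Real.exp (-R x / τ) ∂μ :=
          mul_le_mul_of_nonneg_left (hlower τ hτ0) (by positivity)
  · simpa using (tendsto_exp_neg_div_nhdsGT_zero (half_pos hc)).const_mul C
  · filter_upwards [hτ] with τ hτ
    rw [integral_add_compl hU.measurableSet (hint τ hτ.1)]

/-- Concentration of the Gibbs prior `π_τ ∝ e^{-R/τ}` on the unique global
minimizer `θ₀` of a coercive continuous regularizer `R` as `τ → 0⁺`. -/
theorem gibbs_prior_concentration {d : ℕ}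
    (R : EuclideanSpace ℝ (Fin d) → ℝ) (hR : Continuous R)
    (θ₀ : EuclideanSpace ℝ (Fin d))
    (hmin : ∀ θ, θ ≠ θ₀ → R θ₀ < R θ)
    (hcoercive : Tendsto R (cocompact _) atTop)
    (hint : ∀ τ : ℝ, 0 < τ → Integrable (fun θ => Real.exp (-R θ / τ)))
    (ε : ℝ) (hε : 0 < ε) :
    Tendsto
      (fun τ : ℝ =>
        (∫ θ in Metric.ball θ₀ ε, Real.exp (-R θ / τ)) /
          ∫ θ, Real.exp (-R θ / τ))
      (nhdsWithin 0 (Set.Ioi 0)) (nhds 1) :=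
  tendsto_setIntegral_div_integral_exp_neg_div volume hR hcoercive hmin hint Metric.isOpen_ball
    (Metric.mem_ball_self hε)
end
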